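/- arXiv:1410.5527 — 2 statements merged into one kernel-verified Lean document; each statement's English description precedes it below -/
import Mathlib

section
/- Let φ : ℝ → ℝ be continuously differentiable. Then lim_{ε→0⁺} ∫_{1/2}^{1} f_ε(x) (φ(x) − φ(1)) dx = 0, where f_ε(x) = b_ε/(x(1−x)+ε) with b_ε = c⁺(ε)/ln((c⁺(ε)+1/2)/(c⁺(ε)−1/2)) and c⁺(ε) = √(1/4 + ε). -/
open MeasureTheory Topology Filter

/-- `c⁺(ε) = √(1/4 + ε)`. -/
noncomputable def cplus (ε : ℝ) : ℝ := Real.sqrt (1/4 + ε)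

/-- The normalization constant `b_ε = c⁺(ε)/log((c⁺(ε)+1/2)/(c⁺(ε)−1/2))`. -/
noncomputable def bconst (ε : ℝ) : ℝ :=
  cplus ε / Real.log ((cplus ε + 1/2) / (cplus ε - 1/2))

/-- The viscous steady state `f_ε(x) = b_ε/(x(1−x)+ε)`. -/
noncomputable def fvisc (ε x : ℝ) : ℝ := bconst ε / (x * (1 - x) + ε)

/-!
On `[1/2, 1]` a `C¹` function `φ` is `K`-Lipschitz, so `|φ x - φ 1| ≤ K (1 - x)`, while
`x (1 - x) + ε ≥ (1 - x) / 2`; hence the integrand is bounded by `2 K |b_ε|` and the integral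
by `K |b_ε|`. As `ε → 0⁺`, `c⁺(ε) - 1/2 → 0⁺`, so the logarithm in `b_ε` tends to `+∞` and
`b_ε → 0`.
-/

open Set

lemma half_lt_cplus {ε : ℝ} (hε : 0 < ε) : 1/2 < cplus ε := by
  rw [cplus, Real.lt_sqrt (by norm_num)]
  linarith

lemma tendsto_cplus_nhdsGT_zero : Tendsto cplus (𝓝[>] 0) (𝓝 (1/2)) := by
  have hcont : Continuous cplus := Real.continuous_sqrt.comp (continuous_const.add continuous_id)
  have hzero : cplus 0 = 1/2 := by
    rw [cplus, add_zero, Real.sqrt_eq_iff_mul_self_eq_of_pos (by norm_num)]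
    norm_num
  exact hzero ▸ hcont.continuousWithinAt (s := Ioi 0) (x := 0)

lemma tendsto_bconst_nhdsGT_zero : Tendsto bconst (𝓝[>] 0) (𝓝 0) := by
  have hgap : Tendsto (fun ε => cplus ε - 1/2) (𝓝[>] 0) (𝓝[>] 0) := by
    refine tendsto_nhdsWithin_of_tendsto_nhds_of_eventually_within _ ?_ ?_
    · simpa using tendsto_cplus_nhdsGT_zero.sub_const (1/2)
    · filter_upwards [self_mem_nhdsWithin] with ε hε
      exact sub_pos.mpr (half_lt_cplus hε)
  have hsum : Tendsto (fun ε => cplus ε + 1/2) (𝓝[>] 0) (𝓝 1) := by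
    convert tendsto_cplus_nhdsGT_zero.add_const (1/2) using 2
    norm_num
  have hratio : Tendsto (fun ε => (cplus ε + 1/2) / (cplus ε - 1/2)) (𝓝[>] 0) atTop := by
    simpa only [div_eq_mul_inv, Function.comp_def] using
      hsum.pos_mul_atTop one_pos (tendsto_inv_nhdsGT_zero.comp hgap)
  exact tendsto_cplus_nhdsGT_zero.div_atTop (Real.tendsto_log_atTop.comp hratio)

lemma abs_fvisc_mul_one_sub_le {ε x : ℝ} (hε : 0 ≤ ε) (hx : x ∈ Icc (1/2 : ℝ) 1) :
    |fvisc ε x| * (1 - x) ≤ 2 * |bconst ε| := by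
  obtain ⟨hx₁, hx₂⟩ := hx
  have hden : 1 - x ≤ 2 * (x * (1 - x) + ε) := by nlinarith
  have hden_nonneg : 0 ≤ x * (1 - x) + ε := by nlinarith
  calc |fvisc ε x| * (1 - x) = |bconst ε| * ((1 - x) / (x * (1 - x) + ε)) := by
        rw [fvisc, abs_div, abs_of_nonneg hden_nonneg]; ring
    _ ≤ |bconst ε| * 2 := by
        gcongr
        exact div_le_of_le_mul₀ hden_nonneg zero_le_two (by linarith)
    _ = 2 * |bconst ε| := mul_comm _ _

lemma norm_integral_fvisc_mul_sub_le {φ : ℝ → ℝ} {K : NNReal} {ε : ℝ} (hε : 0 ≤ ε)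
    (hφ : LipschitzOnWith K φ (Icc (1/2) 1)) :
    ‖∫ x in (1/2 : ℝ)..1, fvisc ε x * (φ x - φ 1)‖ ≤ K * |bconst ε| := by
  have hbound : ∀ x ∈ uIoc (1/2 : ℝ) 1, ‖fvisc ε x * (φ x - φ 1)‖ ≤ 2 * K * |bconst ε| := by
    intro x hx
    rw [uIoc_of_le (by norm_num)] at hx
    have hxI : x ∈ Icc (1/2 : ℝ) 1 := Ioc_subset_Icc_self hx
    have hlip : |φ x - φ 1| ≤ K * (1 - x) := by
      simpa [Real.dist_eq, abs_of_nonpos (sub_nonpos.mpr hxI.2)] using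
        hφ.dist_le_mul x hxI 1 (right_mem_Icc.mpr (by norm_num))
    calc ‖fvisc ε x * (φ x - φ 1)‖ = |fvisc ε x| * |φ x - φ 1| := by
          rw [norm_mul, Real.norm_eq_abs, Real.norm_eq_abs]
      _ ≤ |fvisc ε x| * (K * (1 - x)) := by gcongr
      _ = K * (|fvisc ε x| * (1 - x)) := by ring
      _ ≤ K * (2 * |bconst ε|) := mul_le_mul_of_nonneg_left (abs_fvisc_mul_one_sub_le hε hxI) K.2
      _ = 2 * K * |bconst ε| := by ring
  calc ‖∫ x in (1/2 : ℝ)..1, fvisc ε x * (φ x - φ 1)‖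
      ≤ 2 * K * |bconst ε| * |1 - 1/2| := intervalIntegral.norm_integral_le_of_norm_le_const hbound
    _ = K * |bconst ε| := by norm_num; ring

/-- For `φ` continuously differentiable,
`lim_{ε→0⁺} ∫_{1/2}^1 f_ε(x)(φ(x) − φ(1)) dx = 0`. -/
theorem tendsto_integral_fvisc_sub_right (φ : ℝ → ℝ) (hφ : ContDiff ℝ 1 φ) :
    Tendsto (fun ε : ℝ => ∫ x in (1/2:ℝ)..1, fvisc ε x * (φ x - φ 1))
      (𝓝[>] (0:ℝ)) (𝓝 0) := by
  obtain ⟨K, hK⟩ := hφ.contDiffOn.exists_lipschitzOnWith (s := Icc (1/2) 1) one_ne_zero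
    (convex_Icc _ _) isCompact_Icc
  have hlim : Tendsto (fun ε => (K : ℝ) * |bconst ε|) (𝓝[>] 0) (𝓝 0) := by
    simpa using tendsto_bconst_nhdsGT_zero.abs.const_mul (K : ℝ)
  refine squeeze_zero_norm' ?_ hlim
  filter_upwards [self_mem_nhdsWithin] with ε hε
  exact norm_integral_fvisc_mul_sub_le (le_of_lt hε) hK
end

section
/- Let M ≥ 2 be an integer, h = 1/M, τ > 0, x_i = i·h, D_i = x_i(1 − x_i). Let f^n, n = 0, 1, 2, …, satisfy the full Scheme 3: with fluxes j^{n+1}_{i+1/2} = −(D_{i+1} f^{n+1}_{i+1} − D_i f^{n+1}_i)/h, the updates are f^{n+1}_i = f^n_i − (τ/h)(j^{n+1}_{i+1/2} − j^{n+1}_{i−1/2}) for i = 1,…,M−1, f^{n+1}_0 = f^n_0 − (2τ/h) j^{n+1}_{1/2}, and f^{n+1}_M = f^n_M + (2τ/h) j^{n+1}_{M−1/2}. Let P₀ = (h/2)f^0_0 + (h/2)f^0_M + Σ_{i=1}^{M−1} f^0_i h and E₀ = (h/2)x_M f^0_M + Σ_{i=1}^{M−1} x_i f^0_i h. Then as n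 → ∞: f^n_i → 0 for each i = 1,…,M−1, (h/2)f^n_M → E₀, and (h/2)f^n_0 → P₀ − E₀. -/
/-!
With `g = D f`, the interior update is one implicit Euler step of `∂ₜ f = c Δ g`, `c = τ / h²`,
and `g` vanishes at both ends because `D` does. Testing the step against `g` and using AM–GM,
the weighted energy `∑ Dᵢ fᵢ²` drops by at least `2c ∑ (Δg)²`; a discrete Poincaré inequality
for `g` and the bound `Dᵢ ≥ h(1 - h)` in the interior turn this into geometric decay, so the
interior values tend to `0`. The fluxes telescope and, being differences of `g`, sum to zero,
so the trapezoidal mass and first moment are conserved; once the interior has vanished they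
determine the limits of the two boundary values.
-/

open Filter Topology Finset

lemma sum_Ico_sub_pred (u : ℕ → ℝ) (m : ℕ) :
    ∑ i ∈ Ico 1 (m + 1), (u i - u (i - 1)) = u m - u 0 := by
  rw [sum_Ico_eq_sum_range]
  simpa [add_comm] using sum_range_sub u m

lemma sum_Ico_natCast_mul_sub_pred (u : ℕ → ℝ) (m : ℕ) :
    ∑ i ∈ Ico 1 (m + 1), (i : ℝ) * (u i - u (i - 1)) = m * u m - ∑ i ∈ range m, u i := by
  induction m with
  | zero => simp
  | succ k ih =>
    rw [sum_Ico_succ_top (by omega), ih, sum_range_succ, Nat.add_sub_cancel]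
    push_cast
    ring

lemma sum_mul_secondDiff (G : ℕ → ℝ) (m : ℕ) :
    ∑ i ∈ Ico 1 (m + 1), G i * (G (i + 1) - 2 * G i + G (i - 1))
      = -∑ i ∈ range (m + 1), (G (i + 1) - G i) ^ 2
        - G 0 * (G 1 - G 0) + G (m + 1) * (G (m + 1) - G m) := by
  induction m with
  | zero => simp; ring
  | succ k ih =>
    rw [sum_Ico_succ_top (by omega), ih, sum_range_succ _ (k + 1), Nat.add_sub_cancel]
    ring

lemma sq_le_mul_sum_sq_sub (G : ℕ → ℝ) (hG : G 0 = 0) {i N : ℕ} (hi : i ≤ N) :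
    G i ^ 2 ≤ N * ∑ k ∈ range N, (G (k + 1) - G k) ^ 2 :=
  calc G i ^ 2 = (∑ k ∈ range i, (G (k + 1) - G k)) ^ 2 := by rw [sum_range_sub, hG, sub_zero]
    _ ≤ i * ∑ k ∈ range i, (G (k + 1) - G k) ^ 2 := by
      simpa using sq_sum_le_card_mul_sum_sq (s := range i) (f := fun k => G (k + 1) - G k)
    _ ≤ N * ∑ k ∈ range N, (G (k + 1) - G k) ^ 2 := by
      gcongr

def weightedEnergy (M : ℕ) (D u : ℕ → ℝ) : ℝ := ∑ i ∈ Ico 1 M, D i * u i ^ 2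

section ImplicitHeatStep

variable {M : ℕ} {D : ℕ → ℝ}

lemma weightedEnergy_nonneg (hD : ∀ i ∈ Ico 1 M, 0 ≤ D i) (u : ℕ → ℝ) :
    0 ≤ weightedEnergy M D u :=
  sum_nonneg fun i hi => mul_nonneg (hD i hi) (sq_nonneg _)

lemma weightedEnergy_add_le {u v : ℕ → ℝ} {c : ℝ} (hD0 : D 0 = 0) (hDM : D M = 0)
    (hD : ∀ i ∈ Ico 1 M, 0 ≤ D i)
    (hstep : ∀ i ∈ Ico 1 M, v i = u i +
      c * (D (i + 1) * v (i + 1) - 2 * (D i * v i) + D (i - 1) * v (i - 1))) :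
    weightedEnergy M D v + 2 * c * ∑ i ∈ range M, (D (i + 1) * v (i + 1) - D i * v i) ^ 2
      ≤ weightedEnergy M D u := by
  obtain _ | m := M
  · simp [weightedEnergy]
  set g := fun i => D i * v i with hg
  have hidentity : weightedEnergy (m + 1) D v
      = ∑ i ∈ Ico 1 (m + 1), g i * u i - c * ∑ i ∈ range (m + 1), (g (i + 1) - g i) ^ 2 := by
    have hterm : ∀ i ∈ Ico 1 (m + 1), D i * v i ^ 2
        = g i * u i + c * (g i * (g (i + 1) - 2 * g i + g (i - 1))) := by
      intro i hi
      rw [show D i * v i ^ 2 = g i * v i by ring, hstep i hi]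
      ring
    rw [weightedEnergy, sum_congr rfl hterm, sum_add_distrib, ← mul_sum, sum_mul_secondDiff]
    simp only [hg, hD0, hDM]
    ring
  have hamgm : ∑ i ∈ Ico 1 (m + 1), g i * u i
      ≤ (weightedEnergy (m + 1) D v + weightedEnergy (m + 1) D u) / 2 := by
    rw [weightedEnergy, weightedEnergy, ← sum_add_distrib, sum_div]
    gcongr with i hi
    nlinarith [mul_nonneg (hD i hi) (sq_nonneg (v i - u i))]
  linarith

lemma mul_weightedEnergy_le {v : ℕ → ℝ} {α : ℝ} (hD0 : D 0 = 0) (hα : 0 ≤ α)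
    (hD : ∀ i ∈ Ico 1 M, α ≤ D i) :
    α * weightedEnergy M D v
      ≤ M ^ 2 * ∑ i ∈ range M, (D (i + 1) * v (i + 1) - D i * v i) ^ 2 := by
  set S := ∑ i ∈ range M, (D (i + 1) * v (i + 1) - D i * v i) ^ 2
  have hterm : ∀ i ∈ Ico 1 M, α * (D i * v i ^ 2) ≤ M * S := by
    intro i hi
    have hDi := hD i hi
    calc α * (D i * v i ^ 2) ≤ D i * (D i * v i ^ 2) := by
          gcongr
          exact mul_nonneg (hα.trans hDi) (sq_nonneg _)
      _ = (D i * v i) ^ 2 := by ring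
      _ ≤ M * S := sq_le_mul_sum_sq_sub (fun i => D i * v i) (by simp [hD0]) (mem_Ico.1 hi).2.le
  calc α * weightedEnergy M D v = ∑ i ∈ Ico 1 M, α * (D i * v i ^ 2) := mul_sum _ _ _
    _ ≤ ∑ _i ∈ Ico 1 M, (M : ℝ) * S := sum_le_sum hterm
    _ ≤ M * (M * S) := by
      rw [sum_const, Nat.card_Ico, nsmul_eq_mul]
      have : 0 ≤ S := sum_nonneg fun _ _ => sq_nonneg _
      gcongr
      exact_mod_cast Nat.sub_le M 1
    _ = M ^ 2 * S := by ring

theorem tendsto_weightedEnergy_zero {f : ℕ → ℕ → ℝ} {c α : ℝ} (hc : 0 < c) (hα : 0 < α)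
    (hD0 : D 0 = 0) (hDM : D M = 0) (hD : ∀ i ∈ Ico 1 M, α ≤ D i)
    (hstep : ∀ n, ∀ i ∈ Ico 1 M, f (n + 1) i = f n i +
      c * (D (i + 1) * f (n + 1) (i + 1) - 2 * (D i * f (n + 1) i)
        + D (i - 1) * f (n + 1) (i - 1))) :
    Tendsto (fun n => weightedEnergy M D (f n)) atTop (𝓝 0) := by
  have hD' : ∀ i ∈ Ico 1 M, 0 ≤ D i := fun i hi => hα.le.trans (hD i hi)
  have hpos : 0 < (M : ℝ) ^ 2 + 2 * c * α := by positivity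
  set r := (M : ℝ) ^ 2 / ((M : ℝ) ^ 2 + 2 * c * α)
  have hr0 : 0 ≤ r := by positivity
  have hr1 : r < 1 := by
    rw [div_lt_one hpos]
    linarith [mul_pos hc hα]
  have hcontract : ∀ n, weightedEnergy M D (f (n + 1)) ≤ r * weightedEnergy M D (f n) := by
    intro n
    rw [div_mul_eq_mul_div, le_div_iff₀ hpos]
    have hdissip := weightedEnergy_add_le hD0 hDM hD' (hstep n)
    have hpoincare := mul_weightedEnergy_le (v := f (n + 1)) hD0 hα.le hD
    nlinarith [mul_le_mul_of_nonneg_left hdissip (sq_nonneg (M : ℝ)),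
      mul_le_mul_of_nonneg_left hpoincare (by positivity : (0 : ℝ) ≤ 2 * c)]
  refine squeeze_zero (fun n => weightedEnergy_nonneg hD' _)
    (fun n => le_geom (u := fun n => weightedEnergy M D (f n)) hr0 n fun k _ => hcontract k) ?_
  simpa using (tendsto_pow_atTop_nhds_zero_of_lt_one hr0 hr1).mul_const (weightedEnergy M D (f 0))

lemma tendsto_zero_of_weightedEnergy_tendsto_zero {f : ℕ → ℕ → ℝ}
    (hD : ∀ i ∈ Ico 1 M, 0 ≤ D i) {i : ℕ} (hi : i ∈ Ico 1 M) (hDi : 0 < D i)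
    (hQ : Tendsto (fun n => weightedEnergy M D (f n)) atTop (𝓝 0)) :
    Tendsto (fun n => f n i) atTop (𝓝 0) := by
  have hbound : ∀ n, f n i ^ 2 ≤ weightedEnergy M D (f n) / D i := fun n => by
    rw [le_div_iff₀ hDi, mul_comm]
    exact single_le_sum (f := fun k => D k * f n k ^ 2)
      (fun k hk => mul_nonneg (hD k hk) (sq_nonneg _)) hi
  have hsq : Tendsto (fun n => f n i ^ 2) atTop (𝓝 0) :=
    squeeze_zero (fun n => sq_nonneg _) hbound (by simpa using hQ.div_const (D i))
  refine squeeze_zero_norm (fun n => ?_) (by simpa using hsq.sqrt)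
  rw [Real.norm_eq_abs, Real.sqrt_sq_eq_abs]

theorem tendsto_zero_of_implicit_heat_step {f : ℕ → ℕ → ℝ} {c α : ℝ} (hc : 0 < c)
    (hα : 0 < α) (hD0 : D 0 = 0) (hDM : D M = 0) (hD : ∀ i ∈ Ico 1 M, α ≤ D i)
    (hstep : ∀ n, ∀ i ∈ Ico 1 M, f (n + 1) i = f n i +
      c * (D (i + 1) * f (n + 1) (i + 1) - 2 * (D i * f (n + 1) i)
        + D (i - 1) * f (n + 1) (i - 1))) :
    ∀ i ∈ Ico 1 M, Tendsto (fun n => f n i) atTop (𝓝 0) := fun i hi =>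
  tendsto_zero_of_weightedEnergy_tendsto_zero (fun k hk => hα.le.trans (hD k hk)) hi
    (hα.trans_le (hD i hi)) (tendsto_weightedEnergy_zero hc hα hD0 hDM hD hstep)

end ImplicitHeatStep

noncomputable def trapezoidMass (M : ℕ) (h : ℝ) (u : ℕ → ℝ) : ℝ :=
  h / 2 * u 0 + h / 2 * u M + ∑ i ∈ Ico 1 M, u i * h

noncomputable def trapezoidMoment (M : ℕ) (h : ℝ) (u : ℕ → ℝ) : ℝ :=
  h / 2 * ((M : ℝ) * h) * u M + ∑ i ∈ Ico 1 M, ((i : ℝ) * h) * u i * h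

section FluxForm

variable {M : ℕ} {h τ : ℝ} {D u v J : ℕ → ℝ}

lemma implicit_step_of_flux_form
    (hJ : ∀ i, J i = -(D (i + 1) * v (i + 1) - D i * v i) / h)
    (hint : ∀ i, 1 ≤ i → i ≤ M - 1 → v i = u i - (τ / h) * (J i - J (i - 1))) :
    ∀ i ∈ Ico 1 M, v i = u i +
      τ / h ^ 2 * (D (i + 1) * v (i + 1) - 2 * (D i * v i) + D (i - 1) * v (i - 1)) := by
  intro i hi
  obtain ⟨k, rfl⟩ : ∃ k, i = k + 1 := ⟨i - 1, by grind⟩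
  have hk := hint (k + 1) (by omega) (by grind)
  rw [hJ, hJ, Nat.add_sub_cancel] at hk
  rw [Nat.add_sub_cancel]
  linear_combination hk

lemma sum_flux_eq_zero (hJ : ∀ i, J i = -(D (i + 1) * v (i + 1) - D i * v i) / h)
    (hD0 : D 0 = 0) (hDM : D M = 0) : ∑ i ∈ range M, J i = 0 := by
  simp only [hJ, ← sum_div, sum_neg_distrib, sum_range_sub (fun i => D i * v i), hD0, hDM]
  simp

lemma trapezoidMass_eq_of_flux_form (hM : 1 ≤ M)
    (hint : ∀ i, 1 ≤ i → i ≤ M - 1 → v i = u i - (τ / h) * (J i - J (i - 1)))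
    (hb0 : v 0 = u 0 - (2 * τ / h) * J 0) (hbM : v M = u M + (2 * τ / h) * J (M - 1)) :
    trapezoidMass M h v = trapezoidMass M h u := by
  obtain ⟨m, rfl⟩ : ∃ m, M = m + 1 := ⟨M - 1, by omega⟩
  have hterm : ∀ i ∈ Ico 1 (m + 1), v i * h = u i * h - h * (τ / h) * (J i - J (i - 1)) := by
    intro i hi
    rw [hint i (mem_Ico.1 hi).1 (by grind)]
    ring
  rw [trapezoidMass, trapezoidMass, sum_congr rfl hterm, sum_sub_distrib, ← mul_sum,
    sum_Ico_sub_pred, hb0, hbM, Nat.add_sub_cancel]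
  ring

lemma trapezoidMoment_eq_of_flux_form (hM : 1 ≤ M) (hJ : ∑ i ∈ range M, J i = 0)
    (hint : ∀ i, 1 ≤ i → i ≤ M - 1 → v i = u i - (τ / h) * (J i - J (i - 1)))
    (hbM : v M = u M + (2 * τ / h) * J (M - 1)) :
    trapezoidMoment M h v = trapezoidMoment M h u := by
  obtain ⟨m, rfl⟩ : ∃ m, M = m + 1 := ⟨M - 1, by omega⟩
  have hterm : ∀ i ∈ Ico 1 (m + 1), (i : ℝ) * h * v i * h
      = (i : ℝ) * h * u i * h - h ^ 2 * (τ / h) * ((i : ℝ) * (J i - J (i - 1))) := by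
    intro i hi
    rw [hint i (mem_Ico.1 hi).1 (by grind)]
    ring
  have hJm : ∑ i ∈ range m, J i = -J m := by
    rw [sum_range_succ] at hJ
    linarith
  rw [trapezoidMoment, trapezoidMoment, sum_congr rfl hterm, sum_sub_distrib, ← mul_sum,
    sum_Ico_natCast_mul_sub_pred, hJm, hbM, Nat.add_sub_cancel]
  push_cast
  ring

end FluxForm

def gridDiffusivity (h : ℝ) (i : ℕ) : ℝ := i * h * (1 - i * h)

lemma gridDiffusivity_zero (h : ℝ) : gridDiffusivity h 0 = 0 := by
  simp [gridDiffusivity]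

lemma gridDiffusivity_eq_zero_of_mul_eq_one {M : ℕ} {h : ℝ} (hMh : (M : ℝ) * h = 1) :
    gridDiffusivity h M = 0 := by
  simp [gridDiffusivity, hMh]

lemma mul_one_sub_le_mul_one_sub {h x : ℝ} (hx : h ≤ x) (hx' : x ≤ 1 - h) :
    h * (1 - h) ≤ x * (1 - x) := by
  nlinarith [mul_nonneg (sub_nonneg.2 hx) (sub_nonneg.2 hx')]

lemma mul_one_sub_le_gridDiffusivity {M : ℕ} {h : ℝ} (hh : 0 < h) (hMh : (M : ℝ) * h = 1)
    {i : ℕ} (hi : i ∈ Ico 1 M) : h * (1 - h) ≤ gridDiffusivity h i := by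
  obtain ⟨hi1, hiM⟩ := mem_Ico.1 hi
  have hi1' : (1 : ℝ) ≤ i := by exact_mod_cast hi1
  have hiM' : (i : ℝ) + 1 ≤ M := by exact_mod_cast hiM
  exact mul_one_sub_le_mul_one_sub (by nlinarith) (by nlinarith)

section BoundaryLimits

variable {M : ℕ} {h : ℝ} {f : ℕ → ℕ → ℝ}

lemma tendsto_right_of_trapezoidMoment_eq {E : ℝ} (hMh : (M : ℝ) * h = 1)
    (hE : ∀ n, trapezoidMoment M h (f n) = E)
    (hint : ∀ i ∈ Ico 1 M, Tendsto (fun n => f n i) atTop (𝓝 0)) :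
    Tendsto (fun n => h / 2 * f n M) atTop (𝓝 E) := by
  have hsum : Tendsto (fun n => ∑ i ∈ Ico 1 M, (i : ℝ) * h * f n i * h) atTop (𝓝 0) := by
    simpa using tendsto_finsetSum _ fun i hi => ((hint i hi).const_mul ((i : ℝ) * h)).mul_const h
  have heq : ∀ n, h / 2 * f n M = E - ∑ i ∈ Ico 1 M, (i : ℝ) * h * f n i * h := fun n => by
    rw [← hE n, trapezoidMoment, hMh]
    ring
  simpa [heq] using tendsto_const_nhds.sub hsum

lemma tendsto_left_of_trapezoidMass_eq {P E : ℝ} (hP : ∀ n, trapezoidMass M h (f n) = P)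
    (hright : Tendsto (fun n => h / 2 * f n M) atTop (𝓝 E))
    (hint : ∀ i ∈ Ico 1 M, Tendsto (fun n => f n i) atTop (𝓝 0)) :
    Tendsto (fun n => h / 2 * f n 0) atTop (𝓝 (P - E)) := by
  have hsum : Tendsto (fun n => ∑ i ∈ Ico 1 M, f n i * h) atTop (𝓝 0) := by
    simpa using tendsto_finsetSum _ fun i hi => (hint i hi).mul_const h
  have heq : ∀ n, h / 2 * f n 0 = P - h / 2 * f n M - ∑ i ∈ Ico 1 M, f n i * h := fun n => by
    rw [← hP n, trapezoidMass]
    ring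
  simpa [heq] using (tendsto_const_nhds.sub hright).sub hsum

end BoundaryLimits

/-- Long-time behavior of the full implicit Scheme 3 (Theorem 3.5 of the paper):
interior values tend to `0`, `(h/2)f^n_M → E₀`, and `(h/2)f^n_0 → P₀ − E₀`,
where `P₀` and `E₀` are the initial discrete total probability and expectation.
Here `D_i = x_i(1−x_i)`, `x_i = i·h`, `h = 1/M`, and `j n i` stands for the
flux `j^n_{i+1/2}`. -/
theorem scheme3_long_time_behavior
    (M : ℕ) (hM : 2 ≤ M) (h τ : ℝ) (hh : h = 1 / (M : ℝ)) (hτ : 0 < τ)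
    (f : ℕ → ℕ → ℝ) (j : ℕ → ℕ → ℝ)
    (hj : ∀ n i, j n i =
      -((((i : ℝ) + 1) * h * (1 - ((i : ℝ) + 1) * h)) * f n (i + 1)
          - ((i : ℝ) * h * (1 - (i : ℝ) * h)) * f n i) / h)
    (hint : ∀ n, ∀ i, 1 ≤ i → i ≤ M - 1 →
      f (n + 1) i = f n i - (τ / h) * (j (n + 1) i - j (n + 1) (i - 1)))
    (hb0 : ∀ n, f (n + 1) 0 = f n 0 - (2 * τ / h) * j (n + 1) 0)
    (hbM : ∀ n, f (n + 1) M = f n M + (2 * τ / h) * j (n + 1) (M - 1))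
    (P0 E0 : ℝ)
    (hP0 : P0 = h / 2 * f 0 0 + h / 2 * f 0 M + ∑ i ∈ Finset.Ico 1 M, f 0 i * h)
    (hE0 : E0 = h / 2 * ((M : ℝ) * h) * f 0 M
        + ∑ i ∈ Finset.Ico 1 M, ((i : ℝ) * h) * f 0 i * h) :
    (∀ i, 1 ≤ i → i ≤ M - 1 → Tendsto (fun n => f n i) atTop (𝓝 0)) ∧
      Tendsto (fun n => h / 2 * f n M) atTop (𝓝 E0) ∧
      Tendsto (fun n => h / 2 * f n 0) atTop (𝓝 (P0 - E0)) := by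
  have hh0 : 0 < h := by rw [hh]; positivity
  have hMh : (M : ℝ) * h = 1 := by rw [hh]; field_simp
  have hα : 0 < h * (1 - h) := by
    have : (2 : ℝ) ≤ M := by exact_mod_cast hM
    exact mul_pos hh0 (by nlinarith)
  have hD0 := gridDiffusivity_zero h
  have hDM := gridDiffusivity_eq_zero_of_mul_eq_one hMh
  have hflux : ∀ n i, j n i =
      -(gridDiffusivity h (i + 1) * f n (i + 1) - gridDiffusivity h i * f n i) / h := by
    intro n i
    simp only [hj, gridDiffusivity]
    push_cast
    ring
  have hinterior := tendsto_zero_of_implicit_heat_step (by positivity) hα hD0 hDM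
    (fun i hi => mul_one_sub_le_gridDiffusivity hh0 hMh hi)
    fun n => implicit_step_of_flux_form (hflux (n + 1)) (hint n)
  have hmass : ∀ n, trapezoidMass M h (f n) = P0 := Nat.rec hP0.symm fun n ih =>
    (trapezoidMass_eq_of_flux_form (by omega) (hint n) (hb0 n) (hbM n)).trans ih
  have hmoment : ∀ n, trapezoidMoment M h (f n) = E0 := Nat.rec hE0.symm fun n ih =>
    (trapezoidMoment_eq_of_flux_form (by omega) (sum_flux_eq_zero (hflux (n + 1)) hD0 hDM)
      (hint n) (hbM n)).trans ih
  have hright := tendsto_right_of_trapezoidMoment_eq hMh hmoment hinterior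
  exact ⟨fun i hi1 hi2 => hinterior i (mem_Ico.2 ⟨hi1, by omega⟩), hright,
    tendsto_left_of_trapezoidMass_eq hmass hright hinterior⟩
end
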